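/- arXiv:2503.06908 — 3 statements merged into one kernel-verified Lean document; each statement's English description precedes it below -/
import Mathlib

section
/- Let G be a finite abelian group, f : G → ℝ a real-valued function, and v : Ĝ → ℝ a nonzero function with v(χ) ≥ 0 for all χ ∈ Ĝ. Set μ = |supp(v)| and let k be an integer with 1 ≤ k ≤ |G| − 1. Then (|G| − k·μ)·ν_{k+1}(f) ≥ |G|·R_f(v) − μ·Σ_{i=1}^{k} ν_i(f). In particular, if k·μ < |G| then ν_{k+1}(f) ≥ (|G|·R_f(v) − μ·Σ_{i=1}^{k} ν_i(f))/(|G| − k·μ), and if k·μ > |G| then ν_{k+1}(f) ≤ (|G|·R_f(v) − μ·Σ_{i=1}^{k} ν_i(f))/(|G| − k·μ). -/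
open Complex Finset

/-- The dual group `Ĝ = G →* ℂˣ` of a finite abelian group is finite. -/
noncomputable instance instFintypeDual (G : Type*) [CommGroup G] [Fintype G] :
    Fintype (G →* ℂˣ) := by
  have : NeZero (Monoid.exponent G) := ⟨Monoid.exponent_ne_zero_of_finite⟩
  have : Finite (G →* ℂˣ) := by
    obtain ⟨e⟩ := CommGroup.monoidHom_mulEquiv_of_hasEnoughRootsOfUnity G ℂ
    exact Finite.of_equiv G e.symm.toEquiv
  exact Fintype.ofFinite _

/-- The Fourier transform of `f : G → ℂ`, as a function on the dual group `G →* ℂˣ`: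
`f̂(χ) = (1/|G|) ∑_{x ∈ G} f(x) conj(χ(x))`. -/
noncomputable def fourierT {G : Type*} [CommGroup G] [Fintype G] (f : G → ℂ) :
    (G →* ℂˣ) → ℂ :=
  fun χ => (Fintype.card G : ℂ)⁻¹ * ∑ x : G, f x * (starRingEnd ℂ) ((χ x : ℂ))

/-- Normalized inner product `⟨u,w⟩ = (1/|α|) ∑ u(χ) conj(w(χ))`. -/
noncomputable def inn {α : Type*} [Fintype α] (u w : α → ℂ) : ℂ :=
  (Fintype.card α : ℂ)⁻¹ * ∑ χ : α, u χ * (starRingEnd ℂ) (w χ)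

/-- Normalized convolution `(u∗w)(χ) = (1/|α|) ∑_ρ u(χρ⁻¹) w(ρ)`. -/
noncomputable def convol {α : Type*} [Group α] [Fintype α] (u w : α → ℂ) : α → ℂ :=
  fun χ => (Fintype.card α : ℂ)⁻¹ * ∑ ρ : α, u (χ * ρ⁻¹) * w ρ

/-- The Rayleigh quotient `R_f(v) = |G| ⟨f̂ ∗ v, v⟩ / ⟨v, v⟩`. -/
noncomputable def Rq {G : Type*} [CommGroup G] [Fintype G] (f : G → ℂ)
    (v : (G →* ℂˣ) → ℂ) : ℂ :=
  (Fintype.card G : ℂ) * inn (convol (fourierT f) v) v / inn v v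

/-- `nu f k` is the `k`-th largest value (1-indexed, with multiplicity) of the
real-valued function `f` on a finite type. -/
noncomputable def nu {G : Type*} [Fintype G] (f : G → ℝ) (k : ℕ) : ℝ :=
  ((Finset.univ.val.map f).sort (· ≤ ·)).getD (Fintype.card G - k) 0

/-- `f` is positive definite: every Fourier coefficient is a nonnegative real number. -/
def PosDef {G : Type*} [CommGroup G] [Fintype G] (f : G → ℂ) : Prop :=
  ∀ χ : G →* ℂˣ, (fourierT f χ).im = 0 ∧ 0 ≤ (fourierT f χ).re

/-!
Write `W = ∑_ρ v(ρ) ρ` and `q = |W|²`. Unfolding the definitions, `|G| R_f(v)` is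
`∑ f q / ∑ |v|²`, Parseval gives `∑ q = |G| ∑ |v|²`, and Cauchy–Schwarz over the support of `v`
gives `q ≤ μ ∑ |v|²` pointwise. For weights `0 ≤ q ≤ M` and any threshold `t`,
`∑ f q ≤ M ∑ (f - t)⁺ + t ∑ q`, and for `t = ν_{k+1}` the sum `∑ (f - t)⁺` is `∑_{i ≤ k} (ν_i - t)`.
-/

open ComplexConjugate

section Characters

variable {G : Type*} [CommGroup G] [Fintype G]

lemma card_dual : Fintype.card (G →* ℂˣ) = Fintype.card G := by
  have : NeZero (Monoid.exponent G) := ⟨Monoid.exponent_ne_zero_of_finite⟩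
  obtain ⟨e⟩ := CommGroup.monoidHom_mulEquiv_of_hasEnoughRootsOfUnity G ℂ
  exact Fintype.card_congr e.toEquiv

lemma norm_char_apply (χ : G →* ℂˣ) (x : G) : ‖(χ x : ℂ)‖ = 1 := by
  refine Complex.norm_eq_one_of_pow_eq_one ?_ (Fintype.card_ne_zero (α := G))
  rw [← Units.val_pow_eq_pow_val, ← map_pow, pow_card_eq_one, map_one, Units.val_one]

lemma conj_char_apply (χ : G →* ℂˣ) (x : G) : conj (χ x : ℂ) = (χ x : ℂ)⁻¹ := by
  rw [Complex.inv_def, Complex.normSq_eq_norm_sq, norm_char_apply]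
  simp

lemma sum_char_mul_conj (χ ρ : G →* ℂˣ) :
    ∑ x, (χ x : ℂ) * conj (ρ x : ℂ) = if χ = ρ then (Fintype.card G : ℂ) else 0 := by
  classical
  have h := sum_hom_units ((Units.coeHom ℂ).comp (χ * ρ⁻¹))
  have hinj : (Units.coeHom ℂ).comp (χ * ρ⁻¹) = 1 ↔ χ = ρ := by
    rw [← mul_inv_eq_one (a := χ)]
    constructor
    · intro h; ext x; simpa using DFunLike.congr_fun h x
    · rintro h; simp [h]
  simp only [hinj, MonoidHom.coe_comp, Function.comp_apply, MonoidHom.mul_apply,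
    MonoidHom.inv_apply, Units.coeHom_apply, Units.val_mul, Units.val_inv_eq_inv_val] at h
  simp only [conj_char_apply, h]
  split_ifs <;> simp

end Characters

section Fourier

variable {G : Type*} [CommGroup G] [Fintype G]

noncomputable def invFourierT (V : (G →* ℂˣ) → ℂ) (x : G) : ℂ :=
  ∑ ρ : G →* ℂˣ, V ρ * (ρ x : ℂ)

lemma conj_invFourierT (V : (G →* ℂˣ) → ℂ) (x : G) :
    conj (invFourierT V x) = ∑ χ : G →* ℂˣ, conj (V χ) * conj (χ x : ℂ) := by
  simp only [invFourierT, map_sum, map_mul]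

lemma sum_normSq_invFourierT (V : (G →* ℂˣ) → ℂ) :
    ∑ x, normSq (invFourierT V x) = Fintype.card G * ∑ χ, normSq (V χ) := by
  apply Complex.ofReal_injective
  push_cast
  calc ∑ x, (normSq (invFourierT V x) : ℂ)
      = ∑ x, ∑ ρ : G →* ℂˣ, ∑ χ : G →* ℂˣ, V ρ * conj (V χ) * ((ρ x : ℂ) * conj (χ x : ℂ)) := by
        refine sum_congr rfl fun x _ => ?_
        rw [← Complex.mul_conj, conj_invFourierT, invFourierT, sum_mul_sum]
        exact sum_congr rfl fun ρ _ => sum_congr rfl fun χ _ => by ring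
    _ = ∑ ρ : G →* ℂˣ, ∑ χ : G →* ℂˣ, V ρ * conj (V χ) * ∑ x, (ρ x : ℂ) * conj (χ x : ℂ) := by
        rw [sum_comm]
        refine sum_congr rfl fun ρ _ => ?_
        rw [sum_comm]
        simp only [mul_sum]
    _ = ∑ ρ : G →* ℂˣ, (Fintype.card G : ℂ) * (normSq (V ρ) : ℂ) := by
        simp only [sum_char_mul_conj, mul_ite, mul_zero, sum_ite_eq, mem_univ, if_true,
          Complex.mul_conj]
        exact sum_congr rfl fun _ _ => mul_comm _ _
    _ = _ := (mul_sum _ _ _).symm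

lemma inn_self {α : Type*} [Fintype α] (u : α → ℂ) :
    inn u u = (Fintype.card α : ℂ)⁻¹ * ∑ χ, (normSq (u χ) : ℂ) := by
  simp only [inn, Complex.mul_conj]

lemma convol_fourierT_apply (F : G → ℂ) (V : (G →* ℂˣ) → ℂ) (χ : G →* ℂˣ) :
    convol (fourierT F) V χ =
      (Fintype.card G : ℂ)⁻¹ ^ 2 * ∑ x, F x * conj (χ x : ℂ) * invFourierT V x := by
  simp only [convol, fourierT, invFourierT, card_dual, mul_sum, sum_mul]
  rw [sum_comm]
  refine sum_congr rfl fun x _ => sum_congr rfl fun ρ _ => ?_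
  simp only [MonoidHom.mul_apply, MonoidHom.inv_apply, Units.val_mul, map_mul,
    conj_char_apply, Units.val_inv_eq_inv_val, map_inv₀, inv_inv]
  ring

lemma inn_convol_fourierT (F : G → ℂ) (V : (G →* ℂˣ) → ℂ) :
    inn (convol (fourierT F) V) V =
      (Fintype.card G : ℂ)⁻¹ ^ 3 * ∑ x, F x * (normSq (invFourierT V x) : ℂ) := by
  simp only [inn, convol_fourierT_apply, card_dual, ← Complex.mul_conj, conj_invFourierT,
    mul_sum, sum_mul]
  rw [sum_comm]
  refine sum_congr rfl fun x _ => sum_congr rfl fun χ _ => by ring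

lemma Rq_eq_sum_mul_normSq_div (F : G → ℂ) (V : (G →* ℂˣ) → ℂ) :
    Rq F V = (∑ x, F x * (normSq (invFourierT V x) : ℂ)) /
      ((Fintype.card G : ℂ) * ∑ χ, (normSq (V χ) : ℂ)) := by
  have hn : (Fintype.card G : ℂ) ≠ 0 := Nat.cast_ne_zero.2 Fintype.card_ne_zero
  rw [Rq, inn_convol_fourierT, inn_self, card_dual]
  field_simp

lemma re_Rq_ofReal (f : G → ℝ) (V : (G →* ℂˣ) → ℂ) :
    (Rq (fun x => (f x : ℂ)) V).re = (∑ x, f x * normSq (invFourierT V x)) /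
      (Fintype.card G * ∑ χ, normSq (V χ)) := by
  rw [Rq_eq_sum_mul_normSq_div]
  norm_cast

lemma normSq_invFourierT_le (V : (G →* ℂˣ) → ℂ) (x : G) :
    normSq (invFourierT V x) ≤ (Function.support V).ncard * ∑ χ, normSq (V χ) := by
  classical
  set T := (Function.support V).toFinset
  have hnorm : ‖invFourierT V x‖ ≤ ∑ ρ ∈ T, ‖V ρ‖ :=
    calc ‖invFourierT V x‖ ≤ ∑ ρ : G →* ℂˣ, ‖V ρ * (ρ x : ℂ)‖ := norm_sum_le _ _
      _ = ∑ ρ : G →* ℂˣ, ‖V ρ‖ := by simp only [norm_mul, norm_char_apply, mul_one]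
      _ = ∑ ρ ∈ T, ‖V ρ‖ := (sum_subset (subset_univ T) (by simp [T])).symm
  calc normSq (invFourierT V x) = ‖invFourierT V x‖ ^ 2 := normSq_eq_norm_sq _
    _ ≤ (∑ ρ ∈ T, ‖V ρ‖) ^ 2 := pow_le_pow_left₀ (norm_nonneg _) hnorm 2
    _ ≤ T.card * ∑ ρ ∈ T, ‖V ρ‖ ^ 2 := sq_sum_le_card_mul_sum_sq
    _ ≤ (Function.support V).ncard * ∑ χ, normSq (V χ) := by
        rw [Set.ncard_eq_toFinset_card']
        gcongr
        simp only [← normSq_eq_norm_sq]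
        exact sum_le_sum_of_subset_of_nonneg (subset_univ T) fun _ _ _ => normSq_nonneg _

end Fourier

section OrderStatistics

variable {ι : Type*} [Fintype ι]

lemma sum_comp_eq_sum_nu (f : ι → ℝ) (g : ℝ → ℝ) :
    ∑ x, g (f x) = ∑ i ∈ Icc 1 (Fintype.card ι), g (nu f i) := by
  set n := Fintype.card ι
  set l := (univ.val.map f).sort (· ≤ ·)
  have hlen : l.length = n := by simp [l, n]
  calc ∑ x, g (f x) = (l.map g).sum := by
        rw [← Multiset.sum_coe, ← Multiset.map_coe, Multiset.sort_eq, Multiset.map_map]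
        rfl
    _ = ∑ j ∈ range n, g (l.getD j 0) := by
        rw [← Fin.sum_univ_fun_getElem, ← hlen, ← Fin.sum_univ_eq_sum_range]
        exact sum_congr rfl fun j _ => by rw [List.getD_eq_getElem _ _ j.isLt]
    _ = ∑ i ∈ Icc 1 n, g (nu f i) := by
        rw [← Ico_add_one_right_eq_Icc]
        change _ = ∑ i ∈ Ico 1 (n + 1), g (l.getD (n - i) 0)
        rw [sum_Ico_reflect (fun j => g (l.getD j 0)) 1 le_rfl, range_eq_Ico,
          Nat.add_sub_cancel, Nat.sub_self]

lemma nu_le_nu_of_card_sub_le (f : ι → ℝ) {i j : ℕ} (hi : 1 ≤ i)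
    (hij : Fintype.card ι - j ≤ Fintype.card ι - i) : nu f j ≤ nu f i := by
  unfold nu
  set l := (univ.val.map f).sort (· ≤ ·)
  have hlen : l.length = Fintype.card ι := by simp [l]
  by_cases h : Fintype.card ι - i < l.length
  · rw [List.getD_eq_getElem _ _ h, List.getD_eq_getElem _ _ (by omega)]
    exact (Multiset.pairwise_sort _ _).rel_get_of_le (a := ⟨_, _⟩) (b := ⟨_, h⟩) hij
  · rw [List.getD_eq_default _ _ (by omega), List.getD_eq_default _ _ (by omega)]

/- `nu f i` reads entry `card ι - i` of the ascending sort, so for `i > card ι` it is the minimum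
again; this is why the identity holds for every `k`. -/
lemma sum_max_sub_nu (f : ι → ℝ) (k : ℕ) :
    ∑ x, max (f x - nu f (k + 1)) 0 = ∑ i ∈ Icc 1 k, (nu f i - nu f (k + 1)) := by
  set n := Fintype.card ι
  set t := nu f (k + 1)
  have vanish : ∀ i ∈ Icc 1 n ∪ Icc 1 k, i ∉ Icc 1 (min n k) → max (nu f i - t) 0 = 0 := by
    intro i hi hik
    simp only [mem_union, mem_Icc] at hi hik
    exact max_eq_right (sub_nonpos.2 (nu_le_nu_of_card_sub_le f (by omega) (by omega)))
  calc ∑ x, max (f x - t) 0 = ∑ i ∈ Icc 1 n, max (nu f i - t) 0 :=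
        sum_comp_eq_sum_nu f fun a => max (a - t) 0
    _ = ∑ i ∈ Icc 1 (min n k), max (nu f i - t) 0 :=
        (sum_subset (Icc_subset_Icc_right (min_le_left _ _))
          fun i hi => vanish i (mem_union_left _ hi)).symm
    _ = ∑ i ∈ Icc 1 k, max (nu f i - t) 0 :=
        sum_subset (Icc_subset_Icc_right (min_le_right _ _))
          fun i hi => vanish i (mem_union_right _ hi)
    _ = ∑ i ∈ Icc 1 k, (nu f i - t) := sum_congr rfl fun i hi => by
        rw [mem_Icc] at hi
        exact max_eq_left (sub_nonneg.2 (nu_le_nu_of_card_sub_le f hi.1 (by omega)))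

end OrderStatistics

lemma sum_mul_le_of_weight_le {ι : Type*} [Fintype ι] (f q : ι → ℝ) {M : ℝ} (t : ℝ)
    (hq0 : ∀ x, 0 ≤ q x) (hqM : ∀ x, q x ≤ M) :
    ∑ x, f x * q x ≤ M * ∑ x, max (f x - t) 0 + t * ∑ x, q x := by
  rw [mul_sum, mul_sum, ← sum_add_distrib]
  refine sum_le_sum fun x _ => ?_
  have : (f x - t) * q x ≤ M * max (f x - t) 0 := by
    rcases le_total (f x) t with h | h
    · calc (f x - t) * q x ≤ 0 := mul_nonpos_of_nonpos_of_nonneg (sub_nonpos.2 h) (hq0 x)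
        _ ≤ M * max (f x - t) 0 := mul_nonneg ((hq0 x).trans (hqM x)) (le_max_right _ _)
    · rw [max_eq_left (sub_nonneg.2 h), mul_comm]
      exact mul_le_mul_of_nonneg_right (hqM x) (sub_nonneg.2 h)
  linarith

theorem stmt_1_general (G : Type*) [CommGroup G] [Fintype G] (f : G → ℝ)
    (v : (G →* ℂˣ) → ℝ) (hv : v ≠ 0)
    (μ : ℕ) (hμ : μ = (Function.support v).ncard)
    (k : ℕ) :
    ((Fintype.card G : ℝ) - k * μ) * nu f (k + 1) ≥
      (Fintype.card G : ℝ) * (Rq (fun x => (f x : ℂ)) (fun χ => (v χ : ℂ))).re -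
        μ * ∑ i ∈ Finset.Icc 1 k, nu f i ∧
    (k * μ < Fintype.card G →
      nu f (k + 1) ≥
        ((Fintype.card G : ℝ) * (Rq (fun x => (f x : ℂ)) (fun χ => (v χ : ℂ))).re -
          μ * ∑ i ∈ Finset.Icc 1 k, nu f i) / ((Fintype.card G : ℝ) - k * μ)) ∧
    (Fintype.card G < k * μ →
      nu f (k + 1) ≤
        ((Fintype.card G : ℝ) * (Rq (fun x => (f x : ℂ)) (fun χ => (v χ : ℂ))).re -
          μ * ∑ i ∈ Finset.Icc 1 k, nu f i) / ((Fintype.card G : ℝ) - k * μ)) := by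
  set n := Fintype.card G
  set V : (G →* ℂˣ) → ℂ := fun χ => (v χ : ℂ)
  set q : G → ℝ := fun x => normSq (invFourierT V x)
  set S := ∑ χ, normSq (V χ)
  set t := nu f (k + 1)
  have hS : 0 < S := by
    obtain ⟨χ, hχ⟩ := Function.ne_iff.1 hv
    exact sum_pos' (fun _ _ => normSq_nonneg _)
      ⟨χ, mem_univ _, normSq_pos.2 (by simpa [V] using hχ)⟩
  have hR : (n : ℝ) * (Rq (fun x => (f x : ℂ)) V).re = (∑ x, f x * q x) / S := by
    have hn : (n : ℝ) ≠ 0 := Nat.cast_ne_zero.2 Fintype.card_ne_zero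
    rw [re_Rq_ofReal, ← mul_div_assoc, mul_div_mul_left _ _ hn]
  have hsupp : Function.support V = Function.support v := by
    ext; simp [V]
  have hweights : ∑ x, f x * q x ≤ μ * S * ∑ x, max (f x - t) 0 + t * (n * S) := by
    rw [← sum_normSq_invFourierT]
    refine sum_mul_le_of_weight_le f q t (fun x => normSq_nonneg _) fun x => ?_
    simpa only [hμ, hsupp] using normSq_invFourierT_le V x
  have key : ((n : ℝ) - k * μ) * t ≥ n * (Rq (fun x => (f x : ℂ)) V).re -
      μ * ∑ i ∈ Icc 1 k, nu f i := by
    rw [sum_max_sub_nu, sum_sub_distrib, sum_const, Nat.card_Icc, Nat.add_sub_cancel,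
      nsmul_eq_mul] at hweights
    rw [ge_iff_le, hR, sub_le_iff_le_add, div_le_iff₀ hS]
    linear_combination hweights
  refine ⟨key, fun hlt => ?_, fun hgt => ?_⟩
  · have hpos : (0 : ℝ) < n - k * μ := sub_pos.2 (by exact_mod_cast hlt)
    rw [ge_iff_le, div_le_iff₀ hpos]
    linarith
  · have hneg : (n : ℝ) - k * μ < 0 := sub_neg.2 (by exact_mod_cast hgt)
    rw [le_div_iff_of_neg hneg]
    linarith

/-- the key inequality relating `ν_{k+1}(f)` to the Rayleigh quotient of a
nonnegative nonzero `v : Ĝ → ℝ` with support of size `μ`. -/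
theorem stmt_1 (G : Type*) [CommGroup G] [Fintype G] (f : G → ℝ)
    (v : (G →* ℂˣ) → ℝ) (hv : v ≠ 0) (hvpos : ∀ χ, 0 ≤ v χ)
    (μ : ℕ) (hμ : μ = (Function.support v).ncard)
    (k : ℕ) (hk1 : 1 ≤ k) (hk2 : k ≤ Fintype.card G - 1) :
    ((Fintype.card G : ℝ) - k * μ) * nu f (k + 1) ≥
      (Fintype.card G : ℝ) * (Rq (fun x => (f x : ℂ)) (fun χ => (v χ : ℂ))).re -
        μ * ∑ i ∈ Finset.Icc 1 k, nu f i ∧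
    (k * μ < Fintype.card G →
      nu f (k + 1) ≥
        ((Fintype.card G : ℝ) * (Rq (fun x => (f x : ℂ)) (fun χ => (v χ : ℂ))).re -
          μ * ∑ i ∈ Finset.Icc 1 k, nu f i) / ((Fintype.card G : ℝ) - k * μ)) ∧
    (Fintype.card G < k * μ →
      nu f (k + 1) ≤
        ((Fintype.card G : ℝ) * (Rq (fun x => (f x : ℂ)) (fun χ => (v χ : ℂ))).re -
          μ * ∑ i ∈ Finset.Icc 1 k, nu f i) / ((Fintype.card G : ℝ) - k * μ)) :=
  stmt_1_general G f v hv μ hμ k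
end

section
/- Let G be a finite abelian group and f : G → ℝ a real-valued positive definite function whose Fourier support is written as supp(f̂) = {χ₁, χ₁⁻¹, …, χ_r, χ_r⁻¹, χ_{r+1}, …, χ_{r+t}} with these 2r+t characters pairwise distinct, χ_i² ≠ 1 for 1 ≤ i ≤ r and χ_{r+j}² = 1 for 1 ≤ j ≤ t, and assume r ≥ 1. Let G₁ = ℤ^r × (ℤ/2ℤ)^t, let η : G₁ → Ĝ be the homomorphism η(m₁,…,m_{r+t}) = Π_{i=1}^{r+t} χ_i^{m_i}, and let S = {±e₁,…,±e_r, e_{r+1},…,e_{r+t}} where e_i is the i-th standard generator of G₁. Fix positive integers m₁,…,m_r and define h₀ : G₁ → ℝ by h₀(x₁,…,x_{r+t}) = Π_{i=1}^{r} sin(π·x_i/m_i) if 1 ≤ x_i ≤ m_i − 1 for every 1 ≤ i ≤ r, and h₀(x) = 0 otherwise. Then for every x ∈ G₁, (M_f^{G₁}(h₀))(x) ≥ (2·Σ_{i=1}^{r} cos(π/m_i)·f̂(χ_i) + Σ_{j=1}^{t} f̂(χ_{r+j}))·h₀(x). -/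
open Complex Finset

/-- The auxiliary function `h₀` on `G₁ = ℤ^r × (ℤ/2ℤ)^t`:
`h₀(x) = ∏_{i=1}^r sin(π x_i/m_i)` if `1 ≤ x_i ≤ m_i - 1` for all `i`, else `0`. -/
noncomputable def h0 (r t : ℕ) (m : Fin r → ℕ) :
    ((Fin r → ℤ) × (Fin t → ZMod 2)) → ℝ := fun x =>
  open Classical in
  if ∀ i : Fin r, 1 ≤ x.1 i ∧ x.1 i ≤ (m i : ℤ) - 1
    then ∏ i : Fin r, Real.sin (Real.pi * (x.1 i : ℝ) / (m i : ℝ)) else 0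

/-!
`h0` is a product of one-dimensional sine bumps `s_m(y) = sin(π y / m)` on `[1, m - 1]`.
Inside the bump, `s_m(y + 1) + s_m(y - 1) = 2 cos(π / m) s_m(y)` by the addition formula,
and outside it the left side is `≥ 0 = s_m(y)`; multiplying by the other (nonnegative) factors
gives the inequality in each direction `± e_i`. Since `f` is real, `f̂(χ⁻¹) = conj f̂(χ)`, so the
coefficients of `h0(x + e_i)` and `h0(x - e_i)` are both `Re f̂(χ_i) ≥ 0`. Finally `h0` does not
see the `(ℤ/2ℤ)^t` coordinates, so the `ψ_j` terms match exactly.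
-/

lemma starRingEnd_apply_monoidHom {G : Type*} [Group G] [Finite G] (χ : G →* ℂˣ) (x : G) :
    starRingEnd ℂ (χ x : ℂ) = (χ x : ℂ)⁻¹ := by
  have hpow : (χ x : ℂ) ^ Nat.card G = 1 := by
    rw [← Units.val_pow_eq_pow_val, ← map_pow, pow_card_eq_one', map_one, Units.val_one]
  exact (inv_eq_conj (norm_eq_one_of_pow_eq_one hpow Nat.card_pos.ne')).symm

lemma fourierT_ofReal_inv {G : Type*} [CommGroup G] [Fintype G] (f : G → ℝ) (χ : G →* ℂˣ) :
    fourierT (fun x => (f x : ℂ)) χ⁻¹ = starRingEnd ℂ (fourierT (fun x => (f x : ℂ)) χ) := by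
  simp [fourierT, map_sum, starRingEnd_apply_monoidHom]

lemma re_fourierT_ofReal_inv {G : Type*} [CommGroup G] [Fintype G] (f : G → ℝ)
    (χ : G →* ℂˣ) :
    (fourierT (fun x => (f x : ℂ)) χ⁻¹).re = (fourierT (fun x => (f x : ℂ)) χ).re := by
  rw [fourierT_ofReal_inv, conj_re]

noncomputable def sinBump (m : ℕ) (y : ℤ) : ℝ :=
  if 1 ≤ y ∧ y ≤ (m : ℤ) - 1 then Real.sin (Real.pi * y / m) else 0

lemma sinBump_nonneg (m : ℕ) (y : ℤ) : 0 ≤ sinBump m y := by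
  unfold sinBump
  split_ifs with hy
  · have hym : (y : ℝ) ≤ m := by exact_mod_cast hy.2.trans (Int.sub_le_self _ zero_le_one)
    have hm : (0 : ℝ) < m := by exact_mod_cast (show (0 : ℤ) < m by omega)
    refine Real.sin_nonneg_of_nonneg_of_le_pi ?_ ?_
    · have : (0 : ℝ) ≤ y := by exact_mod_cast (zero_le_one.trans hy.1)
      positivity
    · rw [div_le_iff₀ hm]
      exact mul_le_mul_of_nonneg_left hym Real.pi_pos.le
  · exact le_rfl

lemma sinBump_eq_sin (m : ℕ) {y : ℤ} (hy₀ : 0 ≤ y) (hym : y ≤ m) :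
    sinBump m y = Real.sin (Real.pi * y / m) := by
  unfold sinBump
  split_ifs with hy
  · rfl
  · rcases (show y = 0 ∨ y = m by omega) with rfl | rfl
    · simp
    · rcases eq_or_ne m 0 with rfl | hm
      · simp
      · rw [Int.cast_natCast, mul_div_assoc, div_self (Nat.cast_ne_zero.mpr hm), mul_one,
          Real.sin_pi]

lemma two_mul_cos_mul_sinBump_le (m : ℕ) (y : ℤ) :
    2 * Real.cos (Real.pi / m) * sinBump m y ≤ sinBump m (y + 1) + sinBump m (y - 1) := by
  by_cases hy : 1 ≤ y ∧ y ≤ (m : ℤ) - 1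
  · refine le_of_eq ?_
    rw [sinBump_eq_sin m (by omega) (by omega), sinBump_eq_sin m (by omega) (by omega),
      sinBump_eq_sin m (by omega) (by omega)]
    have hadd : Real.pi * ((y + 1 : ℤ) : ℝ) / m = Real.pi * y / m + Real.pi / m := by
      push_cast; ring
    have hsub : Real.pi * ((y - 1 : ℤ) : ℝ) / m = Real.pi * y / m - Real.pi / m := by
      push_cast; ring
    rw [hadd, hsub, Real.sin_add, Real.sin_sub]
    ring
  · rw [sinBump, if_neg hy, mul_zero]
    exact add_nonneg (sinBump_nonneg _ _) (sinBump_nonneg _ _)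

section h0

variable {r t : ℕ} (m : Fin r → ℕ)

lemma h0_eq_prod_sinBump (x : (Fin r → ℤ) × (Fin t → ZMod 2)) :
    h0 r t m x = ∏ i, sinBump (m i) (x.1 i) := by
  unfold h0
  split_ifs with h
  · exact prod_congr rfl fun i _ => (if_pos (h i)).symm
  · obtain ⟨i, hi⟩ := not_forall.mp h
    exact (prod_eq_zero (mem_univ i) (if_neg hi)).symm

lemma h0_snd_add (z : Fin t → ZMod 2) (x : (Fin r → ℤ) × (Fin t → ZMod 2)) :
    h0 r t m ((0, z) + x) = h0 r t m x := by
  simp [h0_eq_prod_sinBump]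

lemma h0_single_add (i : Fin r) (k : ℤ) (x : (Fin r → ℤ) × (Fin t → ZMod 2)) :
    h0 r t m ((Pi.single i k, 0) + x) =
      sinBump (m i) (x.1 i + k) * ∏ j ∈ univ.erase i, sinBump (m j) (x.1 j) := by
  rw [h0_eq_prod_sinBump, ← mul_prod_erase univ _ (mem_univ i)]
  congr 1
  · simp [add_comm]
  · refine prod_congr rfl fun j hj => ?_
    simp [Pi.single_eq_of_ne (ne_of_mem_erase hj)]

lemma two_mul_cos_mul_h0_le (i : Fin r) (x : (Fin r → ℤ) × (Fin t → ZMod 2)) :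
    2 * Real.cos (Real.pi / m i) * h0 r t m x ≤
      h0 r t m ((Pi.single i 1, 0) + x) + h0 r t m (-(Pi.single i 1, 0) + x) := by
  have hx : h0 r t m x = h0 r t m ((Pi.single i 0, 0) + x) := by
    rw [Pi.single_zero, Prod.mk_zero_zero, zero_add]
  rw [hx, Prod.neg_mk, neg_zero, ← Pi.single_neg, h0_single_add, h0_single_add,
    h0_single_add, add_zero, ← sub_eq_add_neg, ← add_mul, ← mul_assoc]
  exact mul_le_mul_of_nonneg_right (two_mul_cos_mul_sinBump_le _ _)
    (prod_nonneg fun j _ => sinBump_nonneg _ _)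

end h0

theorem stmt_7_general (G : Type*) [CommGroup G] [Fintype G]
    (f : G → ℝ) (hf : PosDef (fun x => (f x : ℂ)))
    (r t : ℕ)
    (χ : Fin r → (G →* ℂˣ)) (ψ : Fin t → (G →* ℂˣ))
    (m : Fin r → ℕ) :
    ∀ x : (Fin r → ℤ) × (Fin t → ZMod 2),
      (∑ i : Fin r,
          ((fourierT (fun y => (f y : ℂ)) ((χ i)⁻¹)).re *
              h0 r t m (((Pi.single i 1, 0) : (Fin r → ℤ) × (Fin t → ZMod 2)) + x) +
            (fourierT (fun y => (f y : ℂ)) (χ i)).re *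
              h0 r t m (-((Pi.single i 1, 0) : (Fin r → ℤ) × (Fin t → ZMod 2)) + x))) +
        (∑ j : Fin t,
          (fourierT (fun y => (f y : ℂ)) ((ψ j)⁻¹)).re *
            h0 r t m (((0, Pi.single j 1) : (Fin r → ℤ) × (Fin t → ZMod 2)) + x)) ≥
      (2 * ∑ i : Fin r, Real.cos (Real.pi / (m i : ℝ)) *
          (fourierT (fun y => (f y : ℂ)) (χ i)).re +
        ∑ j : Fin t, (fourierT (fun y => (f y : ℂ)) (ψ j)).re) * h0 r t m x := by
  intro x
  simp only [re_fourierT_ofReal_inv, h0_snd_add]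
  rw [ge_iff_le, add_mul, mul_sum, sum_mul, sum_mul]
  refine add_le_add (sum_le_sum fun i _ => ?_) le_rfl
  linear_combination mul_le_mul_of_nonneg_left (two_mul_cos_mul_h0_le m i x) (hf (χ i)).2

/-- the auxiliary function satisfies
`M_f^{G₁}(h₀)(x) ≥ (2 Σᵢ cos(π/mᵢ) f̂(χᵢ) + Σⱼ f̂(χ_{r+j})) h₀(x)` for all `x ∈ G₁`,
where `M_f^{G₁}(h₀)(x) = Σ_{w ∈ S} f̂(η(w)⁻¹) h₀(w + x)` for
`S = {±e₁, …, ±e_r, e_{r+1}, …, e_{r+t}}` (the sum over `S` being written out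
explicitly, with `η(±eᵢ) = χᵢ^{±1}` and `η(e_{r+j}) = ψⱼ`). -/
theorem stmt_7 (G : Type*) [CommGroup G] [Fintype G]
    (f : G → ℝ) (hf : PosDef (fun x => (f x : ℂ)))
    (r t : ℕ) (hr : 1 ≤ r)
    (χ : Fin r → (G →* ℂˣ)) (ψ : Fin t → (G →* ℂˣ))
    (hχinj : Function.Injective χ) (hψinj : Function.Injective ψ)
    (hχ2 : ∀ i, (χ i) ^ 2 ≠ 1) (hψ2 : ∀ j, (ψ j) ^ 2 = 1)
    (hχinv : ∀ i j, χ i ≠ (χ j)⁻¹) (hχψ : ∀ i j, χ i ≠ ψ j)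
    (hsupp : Function.support (fourierT (fun x => (f x : ℂ))) =
      Set.range χ ∪ Set.range (fun i => (χ i)⁻¹) ∪ Set.range ψ)
    (m : Fin r → ℕ) (hm : ∀ i, 0 < m i) :
    ∀ x : (Fin r → ℤ) × (Fin t → ZMod 2),
      (∑ i : Fin r,
          ((fourierT (fun y => (f y : ℂ)) ((χ i)⁻¹)).re *
              h0 r t m (((Pi.single i 1, 0) : (Fin r → ℤ) × (Fin t → ZMod 2)) + x) +
            (fourierT (fun y => (f y : ℂ)) (χ i)).re *
              h0 r t m (-((Pi.single i 1, 0) : (Fin r → ℤ) × (Fin t → ZMod 2)) + x))) +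
        (∑ j : Fin t,
          (fourierT (fun y => (f y : ℂ)) ((ψ j)⁻¹)).re *
            h0 r t m (((0, Pi.single j 1) : (Fin r → ℤ) × (Fin t → ZMod 2)) + x)) ≥
      (2 * ∑ i : Fin r, Real.cos (Real.pi / (m i : ℝ)) *
          (fourierT (fun y => (f y : ℂ)) (χ i)).re +
        ∑ j : Fin t, (fourierT (fun y => (f y : ℂ)) (ψ j)).re) * h0 r t m x :=
  stmt_7_general G f hf r t χ ψ m
end

section
/- Let d be a positive integer and c > 0 a real number, and define θ : [1, ∞) → ℝ by θ(x) = x²·(1 − c·(x − 1)^d). Then θ attains its maximum on [1, ∞), and every maximizer x₀ of θ on [1, ∞) satisfies (2/(2c + c·d))^{1/d} < x₀ < (2/(2c + c·d))^{1/d} + 1. -/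
/-!
Write `r = (2/(2c + cd))^{1/d}`, so that `c (d + 2) r^d = 2`. The derivative factors as
`θ'(x) = x (2 - c (x - 1)^{d-1} ((d + 2) x - 2))`, which is positive on `[1, r]` and negative on
`[r + 1, ∞)`. A maximizer on `[1, ∞)` has `θ' ≤ 0` (one-sided Fermat), which excludes `[1, r]`,
and `θ' = 0` when it is interior, which excludes `[r + 1, ∞)`. A maximizer exists because `θ` is
continuous and eventually negative.
-/

open Set Filter

theorem exists_isMaxOn_Ici_of_eventually_le {α : Type*} [LinearOrder α] [TopologicalSpace α]
    [ClosedIciTopology α] {f : ℝ → α} {a : ℝ} (hf : ContinuousOn f (Ici a))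
    (htop : ∀ᶠ x in atTop, f x ≤ f a) : ∃ x₀ ∈ Ici a, IsMaxOn f (Ici a) x₀ := by
  refine hf.exists_isMaxOn' isClosed_Ici self_mem_Ici ?_
  rw [cocompact_eq_atBot_atTop, inf_sup_right, (disjoint_atBot_principal_Ici a).eq_bot,
    bot_sup_eq]
  exact htop.filter_mono inf_le_left

theorem IsLocalMaxOn.hasDerivAt_nonpos_of_Ici {f : ℝ → ℝ} {a x₀ f' : ℝ}
    (h : IsLocalMaxOn f (Ici a) x₀) (hx₀ : x₀ ∈ Ici a) (hf : HasDerivAt f f' x₀) : f' ≤ 0 := by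
  have hdir : (x₀ + 1) - x₀ ∈ posTangentConeAt (Ici a) x₀ :=
    sub_mem_posTangentConeAt_of_segment_subset
      ((segment_eq_Icc (by linarith)).subset.trans (Icc_subset_Ici_iff (by linarith) |>.2 hx₀))
  simpa using h.hasFDerivWithinAt_nonpos hf.hasDerivWithinAt.hasFDerivWithinAt hdir

def theta (c : ℝ) (d : ℕ) (x : ℝ) : ℝ := x ^ 2 * (1 - c * (x - 1) ^ d)

def thetaDeriv (c : ℝ) (d : ℕ) (x : ℝ) : ℝ :=
  x * (2 - c * ((x - 1) ^ (d - 1) * ((d + 2) * x - 2)))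

section Theta

variable {c : ℝ} {d : ℕ}

theorem hasDerivAt_theta (hd : d ≠ 0) (x : ℝ) : HasDerivAt (theta c d) (thetaDeriv c d x) x := by
  have h := (hasDerivAt_pow 2 x).fun_mul
    (((((hasDerivAt_id x).sub_const 1).fun_pow d).const_mul c).const_sub 1)
  refine h.congr_deriv ?_
  rw [thetaDeriv, id, ← pow_sub_one_mul hd (x - 1)]
  push_cast
  ring

theorem eventually_theta_nonpos (hc : 0 < c) (hd : d ≠ 0) : ∀ᶠ x in atTop, theta c d x ≤ 0 := by
  have hpow : Tendsto (fun x : ℝ => c * (x - 1) ^ d) atTop atTop :=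
    ((tendsto_pow_atTop hd).comp (tendsto_atTop_add_const_right _ (-1) tendsto_id)).const_mul_atTop
      hc
  filter_upwards [hpow.eventually_ge_atTop 1] with x hx
  exact mul_nonpos_of_nonneg_of_nonpos (sq_nonneg x) (by linarith)

theorem exists_isMaxOn_theta (hc : 0 < c) (hd : d ≠ 0) :
    ∃ x₀ ∈ Ici (1 : ℝ), IsMaxOn (theta c d) (Ici 1) x₀ := by
  refine exists_isMaxOn_Ici_of_eventually_le (by unfold theta; fun_prop) ?_
  have htheta_one : theta c d 1 = 1 := by simp [theta, hd]
  filter_upwards [eventually_theta_nonpos hc hd] with x hx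
  linarith

theorem thetaDeriv_pos (hc : 0 < c) (hd : d ≠ 0) {r x : ℝ} (hr : c * (d + 2) * r ^ d = 2)
    (hx : 1 ≤ x) (hxr : x ≤ r) : 0 < thetaDeriv c d x := by
  have hd0 : (0 : ℝ) ≤ d := d.cast_nonneg
  have hg : (x - 1) ^ (d - 1) * ((d + 2) * x - 2) < (d + 2) * r ^ d :=
    calc (x - 1) ^ (d - 1) * ((d + 2) * x - 2) ≤ r ^ (d - 1) * ((d + 2) * r - 2) :=
          mul_le_mul (pow_le_pow_left₀ (by linarith) (by linarith) _) (by nlinarith)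
            (by nlinarith) (pow_nonneg (by linarith) _)
      _ < r ^ (d - 1) * ((d + 2) * r) := by
          gcongr
          · exact pow_pos (by linarith) _
          · linarith
      _ = (d + 2) * r ^ d := by rw [← pow_sub_one_mul hd r]; ring
  have : c * ((x - 1) ^ (d - 1) * ((d + 2) * x - 2)) < 2 := by nlinarith
  exact mul_pos (by linarith) (by linarith)

theorem thetaDeriv_neg (hc : 0 < c) (hd : d ≠ 0) {r x : ℝ} (hr0 : 0 < r)
    (hr : c * (d + 2) * r ^ d = 2) (hx : r + 1 ≤ x) : thetaDeriv c d x < 0 := by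
  have hd1 : (1 : ℝ) ≤ d := by exact_mod_cast Nat.one_le_iff_ne_zero.2 hd
  have hg : (d + 2) * r ^ d < (x - 1) ^ (d - 1) * ((d + 2) * x - 2) :=
    calc (d + 2) * r ^ d ≤ (d + 2) * (x - 1) ^ d := by gcongr; linarith
      _ = (x - 1) ^ (d - 1) * ((d + 2) * (x - 1)) := by rw [← pow_sub_one_mul hd]; ring
      _ < (x - 1) ^ (d - 1) * ((d + 2) * x - 2) := by
          gcongr
          · exact pow_pos (by linarith) _
          · linarith
  have : 2 < c * ((x - 1) ^ (d - 1) * ((d + 2) * x - 2)) := by nlinarith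
  exact mul_neg_of_pos_of_neg (by linarith) (by linarith)

theorem mul_threshold_pow_eq_two (hc : 0 < c) (hd : d ≠ 0) :
    c * (d + 2) * ((2 / (2 * c + c * d)) ^ ((1 : ℝ) / d)) ^ d = 2 := by
  rw [one_div, Real.rpow_inv_natCast_pow (by positivity) hd]
  field_simp
  ring

end Theta

/-- `θ(x) = x²(1 − c(x−1)^d)` attains its maximum on `[1, ∞)`, and every
maximizer `x₀` satisfies `(2/(2c+cd))^{1/d} < x₀ < (2/(2c+cd))^{1/d} + 1`. -/
theorem stmt_11 (d : ℕ) (hd : 0 < d) (c : ℝ) (hc : 0 < c) :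
    (∃ x₀ ∈ Set.Ici (1 : ℝ),
      IsMaxOn (fun x : ℝ => x ^ 2 * (1 - c * (x - 1) ^ d)) (Set.Ici 1) x₀) ∧
    ∀ x₀ ∈ Set.Ici (1 : ℝ),
      IsMaxOn (fun x : ℝ => x ^ 2 * (1 - c * (x - 1) ^ d)) (Set.Ici 1) x₀ →
        (2 / (2 * c + c * d)) ^ ((1 : ℝ) / d) < x₀ ∧
          x₀ < (2 / (2 * c + c * d)) ^ ((1 : ℝ) / d) + 1 := by
  refine ⟨exists_isMaxOn_theta hc hd.ne', fun x₀ hx₀ hmax => ?_⟩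
  set r := (2 / (2 * c + c * d)) ^ ((1 : ℝ) / d)
  have hr : c * (d + 2) * r ^ d = 2 := mul_threshold_pow_eq_two hc hd.ne'
  have hr0 : 0 < r := by positivity
  have hderiv : HasDerivAt (theta c d) (thetaDeriv c d x₀) x₀ := hasDerivAt_theta hd.ne' x₀
  constructor
  · by_contra! hx₀r
    exact (thetaDeriv_pos hc hd.ne' hr hx₀ hx₀r).not_ge
      (hmax.localize.hasDerivAt_nonpos_of_Ici hx₀ hderiv)
  · by_contra! hx₀r
    exact (thetaDeriv_neg hc hd.ne' hr0 hr hx₀r).ne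
      ((hmax.isLocalMax (Ici_mem_nhds (by linarith))).hasDerivAt_eq_zero hderiv)
end
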